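/- Let n = p_1^{m} p_2 where p_1 and p_2 are distinct primes and m ≥ 2. Then the metric dimension of the essential ideal graph E_{Z_n} of Z_n = Z/nZ equals 2m − 2. -/

import Mathlib

/-- An ideal `I` of a commutative ring `R` is essential if it is nonzero and has
nonzero intersection with every nonzero ideal of `R`. -/
def IsEssentialIdeal {R : Type*} [CommRing R] (I : Ideal R) : Prop :=
  I ≠ ⊥ ∧ ∀ J : Ideal R, J ≠ ⊥ → I ⊓ J ≠ ⊥

/-- The essential ideal graph of a commutative ring `R`: vertices are the nonzero
proper ideals of `R`, and distinct vertices `I`, `J` are adjacent iff `I + J` is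
an essential ideal of `R`. -/
def essentialIdealGraph (R : Type*) [CommRing R] :
    SimpleGraph {I : Ideal R // I ≠ ⊥ ∧ I ≠ ⊤} where
  Adj I J := I ≠ J ∧ IsEssentialIdeal (I.1 ⊔ J.1)
  symm := ⟨by
    rintro I J ⟨hne, h⟩
    exact ⟨hne.symm, by rwa [sup_comm]⟩⟩
  loopless := ⟨fun I h => h.1 rfl⟩

/-- The annihilating ideal graph of a commutative ring `R`: vertices are the nonzero
annihilating ideals of `R`, with distinct vertices `I`, `J` adjacent iff `I * J = 0`. -/
def annihilatingIdealGraph (R : Type*) [CommRing R] :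
    SimpleGraph {I : Ideal R // I ≠ ⊥ ∧ ∃ J : Ideal R, J ≠ ⊥ ∧ I * J = ⊥} where
  Adj I J := I ≠ J ∧ I.1 * J.1 = ⊥
  symm := ⟨by
    rintro I J ⟨hne, h⟩
    exact ⟨hne.symm, by rwa [mul_comm]⟩⟩
  loopless := ⟨fun I h => h.1 rfl⟩

/-- A set `W` of vertices of a graph `G` is a resolving set if any two distinct
vertices are distinguished by their distance to some element of `W`. -/
def IsResolvingSet {V : Type*} (G : SimpleGraph V) (W : Set V) : Prop :=
  ∀ u v : V, u ≠ v → ∃ w ∈ W, G.dist u w ≠ G.dist v w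

/-- The metric dimension of a graph: the least cardinality of a (finite) resolving set. -/
noncomputable def metricDim {V : Type*} (G : SimpleGraph V) : ℕ :=
  sInf {k : ℕ | ∃ W : Set V, W.Finite ∧ IsResolvingSet G W ∧ W.ncard = k}

/-- The degree of a vertex: the number of vertices adjacent to it. -/
noncomputable def gdeg {V : Type*} (G : SimpleGraph V) (v : V) : ℕ :=
  Nat.card {u : V // G.Adj v u}

/-- The first Zagreb index: the sum of the squares of the vertex degrees. -/
noncomputable def zagreb1 {V : Type*} (G : SimpleGraph V) : ℕ :=
  ∑ᶠ v : V, (gdeg G v) ^ 2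

/-- The second Zagreb index: the sum over edges `{u,v}` of `deg u * deg v`. -/
noncomputable def zagreb2 {V : Type*} (G : SimpleGraph V) : ℕ :=
  ∑ᶠ e ∈ G.edgeSet, Sym2.lift ⟨fun u v => gdeg G u * gdeg G v, fun u v => mul_comm _ _⟩ e

/-!
The ideals of `ℤ/nℤ` are the spans `(d)` of the divisors `d ∣ n`, ordered by reverse
divisibility. Its minimal nonzero ideals are the `(n / r)` for the primes `r ∣ n`, and an ideal
is essential iff it contains all of them. For `n = p^m q` this says that `I` is essential iff
`I ⊄ (p^m)` and `I ⊄ (q)`. As `(p^m)` is itself minimal, two distinct vertices `I ≠ J` are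
adjacent iff one of them is not contained in `(q)`: the graph is the join of the clique of ideals
`⊄ (q)` with the independent set of nonzero ideals `⊆ (q)`. Inside each part the vertices are
twins, so a resolving set misses at most one vertex of each part, and missing exactly one of each
still resolves. Since there are `2(m + 1) - 2 = 2m` vertices, the metric dimension is `2m - 2`.
-/

open Ideal

lemma Nat.eq_or_eq_mul_of_dvd_of_dvd_mul {m f r : ℕ} (hr : r.Prime) (hm : m ≠ 0)
    (hmf : m ∣ f) (hfm : f ∣ m * r) : f = m ∨ f = m * r := by
  obtain ⟨k, rfl⟩ := hmf
  rcases hr.eq_one_or_self_of_dvd k (Nat.dvd_of_mul_dvd_mul_left (Nat.pos_of_ne_zero hm) hfm)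
    with rfl | rfl
  · exact Or.inl (mul_one m)
  · exact Or.inr rfl

lemma Nat.dvd_div_iff_not_pow_dvd {r k s d : ℕ} (hr : r.Prime) (hk : k ≠ 0)
    (hrs : ¬ r ∣ s) (hd : d ∣ r ^ k * s) : d ∣ r ^ k * s / r ↔ ¬ r ^ k ∣ d := by
  obtain ⟨j, rfl⟩ := Nat.exists_eq_succ_of_ne_zero hk
  have hdiv : r ^ (j + 1) * s / r = r ^ j * s := by
    rw [pow_succ', mul_assoc, Nat.mul_div_cancel_left _ hr.pos]
  rw [hdiv]
  constructor
  · intro hdj hjd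
    rw [pow_succ] at hjd
    exact hrs (Nat.dvd_of_mul_dvd_mul_left (pow_pos hr.pos j) (hjd.trans hdj))
  · intro hnd
    obtain ⟨d₁, d₂, h₁, h₂, rfl⟩ := exists_dvd_and_dvd_of_dvd_mul hd
    obtain ⟨i, -, rfl⟩ := (Nat.dvd_prime_pow hr).mp h₁
    have hij : i ≤ j := by
      by_contra hij
      exact hnd (Dvd.dvd.mul_right (pow_dvd_pow r (by omega)) d₂)
    exact mul_dvd_mul (pow_dvd_pow r hij) h₂

lemma Nat.card_ne_bot_and_ne_top {α : Type*} [PartialOrder α] [BoundedOrder α] [Finite α]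
    (h : (⊥ : α) ≠ ⊤) : Nat.card {a : α // a ≠ ⊥ ∧ a ≠ ⊤} = Nat.card α - 2 := by
  have hcompl := Set.ncard_compl ({⊥, ⊤} : Set α)
  rw [Set.ncard_pair h] at hcompl
  rw [← hcompl, ← Nat.card_coe_set_eq]
  congr
  ext
  simp

namespace ZMod

variable {n : ℕ}

lemma span_natCast_le_span_natCast_iff {d e : ℕ} (he : e ∣ n) :
    span {(d : ZMod n)} ≤ span {(e : ZMod n)} ↔ e ∣ d := by
  rw [span_singleton_le_span_singleton]
  refine ⟨fun ⟨c, hc⟩ => ?_, fun h => Nat.cast_dvd_cast h⟩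
  have := congrArg (ZMod.castHom he (ZMod e)) hc
  rwa [map_natCast, map_mul, map_natCast, ZMod.natCast_self, zero_mul,
    ZMod.natCast_eq_zero_iff] at this

lemma span_natCast_inj {d e : ℕ} (hd : d ∣ n) (he : e ∣ n) :
    span {(d : ZMod n)} = span {(e : ZMod n)} ↔ d = e :=
  ⟨fun h => Nat.dvd_antisymm ((span_natCast_le_span_natCast_iff hd).mp h.ge)
    ((span_natCast_le_span_natCast_iff he).mp h.le), fun h => h ▸ rfl⟩

lemma span_natCast_eq_bot_iff {d : ℕ} : span {(d : ZMod n)} = ⊥ ↔ n ∣ d := by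
  rw [span_singleton_eq_bot, ZMod.natCast_eq_zero_iff]

lemma span_natCast_ne_bot_and_ne_top {d : ℕ} (hd : d ∣ n) (h1 : d ≠ 1) (hn : d ≠ n) :
    span {(d : ZMod n)} ≠ ⊥ ∧ span {(d : ZMod n)} ≠ ⊤ := by
  refine ⟨fun h => hn (Nat.dvd_antisymm hd (span_natCast_eq_bot_iff.mp h)), ?_⟩
  rw [← span_singleton_one, ← Nat.cast_one, Ne, span_natCast_inj hd (one_dvd n)]
  exact h1

lemma exists_dvd_eq_span_natCast (I : Ideal (ZMod n)) :
    ∃ d, d ∣ n ∧ I = span {(d : ZMod n)} := by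
  obtain ⟨g, hg⟩ := (IsPrincipalIdealRing.principal (I.comap (Int.castRingHom (ZMod n)))).principal
  have hg' : I.comap (Int.castRingHom (ZMod n)) = span {(g.natAbs : ℤ)} := by
    rw [Int.span_natAbs]
    exact hg
  refine ⟨g.natAbs, ?_, ?_⟩
  · have hn : (n : ℤ) ∈ I.comap (Int.castRingHom (ZMod n)) := by simp
    rw [hg', mem_span_singleton] at hn
    exact_mod_cast hn
  · rw [← map_comap_of_surjective (Int.castRingHom (ZMod n)) ZMod.intCast_surjective I, hg',
      map_span, Set.image_singleton]
    simp

lemma card_ideal (hn : n ≠ 0) : Nat.card (Ideal (ZMod n)) = n.divisors.card := by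
  rw [← Nat.card_eq_finsetCard]
  refine (Nat.card_eq_of_bijective (fun d : n.divisors => span {((d : ℕ) : ZMod n)})
    ⟨?_, fun I => ?_⟩).symm
  · rintro ⟨d, hd⟩ ⟨e, he⟩ h
    rw [Nat.mem_divisors] at hd he
    exact Subtype.ext ((span_natCast_inj hd.1 he.1).mp h)
  · obtain ⟨d, hd, rfl⟩ := exists_dvd_eq_span_natCast I
    exact ⟨⟨d, Nat.mem_divisors.mpr ⟨hd, hn⟩⟩, rfl⟩

lemma isAtom_span_natCast_div {r : ℕ} (hn : n ≠ 0) (hr : r.Prime) (hrn : r ∣ n) :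
    IsAtom (span {((n / r : ℕ) : ZMod n)}) := by
  have hpos : 0 < n / r := Nat.div_pos (Nat.le_of_dvd (Nat.pos_of_ne_zero hn) hrn) hr.pos
  refine ⟨fun h => ?_, fun J hJ => ?_⟩
  · have hlt : n / r < n := Nat.div_lt_self (Nat.pos_of_ne_zero hn) hr.one_lt
    exact absurd (Nat.le_of_dvd hpos (span_natCast_eq_bot_iff.mp h)) hlt.not_ge
  · obtain ⟨f, hf, rfl⟩ := exists_dvd_eq_span_natCast J
    rw [← Nat.div_mul_cancel hrn] at hf
    rcases Nat.eq_or_eq_mul_of_dvd_of_dvd_mul hr hpos.ne'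
      ((span_natCast_le_span_natCast_iff (Nat.div_dvd_of_dvd hrn)).mp hJ.le) hf with rfl | hf
    · exact absurd rfl hJ.ne
    · rw [span_natCast_eq_bot_iff, hf, Nat.div_mul_cancel hrn]

lemma exists_span_natCast_div_le {I : Ideal (ZMod n)} (hI : I ≠ ⊥) :
    ∃ r, r.Prime ∧ r ∣ n ∧ span {((n / r : ℕ) : ZMod n)} ≤ I := by
  obtain ⟨e, ⟨c, hc⟩, rfl⟩ := exists_dvd_eq_span_natCast I
  have hc1 : c ≠ 1 := by
    rintro rfl
    exact hI (span_natCast_eq_bot_iff.mpr (by rw [hc, mul_one]))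
  obtain ⟨r, hr, hrc⟩ := Nat.exists_prime_and_dvd hc1
  have hern : r * e ∣ n := by
    rw [hc, mul_comm r e]
    exact mul_dvd_mul_left e hrc
  refine ⟨r, hr, (Dvd.intro e rfl).trans hern, ?_⟩
  exact (span_natCast_le_span_natCast_iff ⟨c, hc⟩).mpr (Nat.dvd_div_of_mul_dvd hern)

theorem isEssentialIdeal_iff (hn : 1 < n) {I : Ideal (ZMod n)} :
    IsEssentialIdeal I ↔ ∀ r, r.Prime → r ∣ n → span {((n / r : ℕ) : ZMod n)} ≤ I := by
  have hn0 : n ≠ 0 := by omega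
  refine ⟨fun ⟨_, hI⟩ r hr hrn => ?_, fun h => ⟨?_, fun J hJ => ?_⟩⟩
  · have hatom := isAtom_span_natCast_div hn0 hr hrn
    rw [← hatom.not_disjoint_iff_le, disjoint_iff, inf_comm]
    exact hI _ hatom.ne_bot
  · obtain ⟨r, hr, hrn⟩ := Nat.exists_prime_and_dvd hn.ne'
    exact ne_bot_of_le_ne_bot (isAtom_span_natCast_div hn0 hr hrn).ne_bot (h r hr hrn)
  · obtain ⟨r, hr, hrn, hle⟩ := exists_span_natCast_div_le hJ
    exact ne_bot_of_le_ne_bot (isAtom_span_natCast_div hn0 hr hrn).ne_bot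
      (le_inf (h r hr hrn) hle)

lemma span_natCast_div_le_iff_not_le {r k s : ℕ} (hn : n = r ^ k * s) (hr : r.Prime)
    (hk : k ≠ 0) (hrs : ¬ r ∣ s) (I : Ideal (ZMod n)) :
    span {((n / r : ℕ) : ZMod n)} ≤ I ↔ ¬ I ≤ span {((r ^ k : ℕ) : ZMod n)} := by
  obtain ⟨d, hd, rfl⟩ := exists_dvd_eq_span_natCast I
  rw [span_natCast_le_span_natCast_iff hd,
    span_natCast_le_span_natCast_iff (hn ▸ dvd_mul_right _ _)]
  subst hn
  exact Nat.dvd_div_iff_not_pow_dvd hr hk hrs hd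

end ZMod

section ResolvingSets

variable {V : Type*} {G : SimpleGraph V}

lemma IsResolvingSet.ncard_sdiff_le_one [Finite V] {W S : Set V} (hW : IsResolvingSet G W)
    (htwin : ∀ x ∈ S, ∀ y ∈ S, ∀ w, w ≠ x → w ≠ y → G.dist x w = G.dist y w) :
    (S \ W).ncard ≤ 1 := by
  rw [Set.ncard_le_one]
  rintro x ⟨hxS, hxW⟩ y ⟨hyS, hyW⟩
  by_contra hxy
  obtain ⟨w, hw, hne⟩ := hW x y hxy
  exact hne (htwin x hxS y hyS w (ne_of_mem_of_not_mem hw hxW) (ne_of_mem_of_not_mem hw hyW))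

lemma metricDim_eq [Finite V] {W : Set V} {k : ℕ} (hW : IsResolvingSet G W)
    (hcard : W.ncard = k) (hmin : ∀ W, IsResolvingSet G W → k ≤ W.ncard) : metricDim G = k :=
  le_antisymm (Nat.sInf_le ⟨W, W.toFinite, hW, hcard⟩)
    (le_csInf ⟨k, W, W.toFinite, hW, hcard⟩ (by rintro _ ⟨W, -, hW, rfl⟩; exact hmin W hW))

end ResolvingSets

section JoinOfCliqueAndIndependentSet

variable {V : Type*} {G : SimpleGraph V} {A : Set V}

lemma dist_eq_one_of_adj_iff (hadj : ∀ u v, G.Adj u v ↔ u ≠ v ∧ (u ∈ A ∨ v ∈ A)) {u v : V}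
    (huv : u ≠ v) (h : u ∈ A ∨ v ∈ A) : G.dist u v = 1 :=
  SimpleGraph.dist_eq_one_iff_adj.mpr ((hadj u v).mpr ⟨huv, h⟩)

lemma dist_eq_two_of_adj_iff (hadj : ∀ u v, G.Adj u v ↔ u ≠ v ∧ (u ∈ A ∨ v ∈ A)) {a u v : V}
    (ha : a ∈ A) (huv : u ≠ v) (hu : u ∉ A) (hv : v ∉ A) : G.dist u v = 2 := by
  have hedist : G.edist u v = 2 := by
    refine SimpleGraph.edist_eq_two_iff.mpr ⟨huv, fun h => ?_, a, ?_⟩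
    · rcases ((hadj u v).mp h).2 with h | h <;> contradiction
    · exact ⟨(hadj u a).mpr ⟨(ne_of_mem_of_not_mem ha hu).symm, Or.inr ha⟩,
        (hadj v a).mpr ⟨(ne_of_mem_of_not_mem ha hv).symm, Or.inr ha⟩⟩
  simp [SimpleGraph.dist, hedist]

theorem metricDim_eq_card_sub_two [Finite V]
    (hadj : ∀ u v, G.Adj u v ↔ u ≠ v ∧ (u ∈ A ∨ v ∈ A)) (hA : A.Nonempty)
    (hAc : Aᶜ.Nontrivial) : metricDim G = Nat.card V - 2 := by
  obtain ⟨a, ha⟩ := hA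
  obtain ⟨b₀, hb₀, b₁, hb₁, hb⟩ := hAc
  have hdist_ne_zero : ∀ u v : V, u ≠ v → G.dist u v ≠ 0 := by
    intro u v huv
    by_cases h : u ∈ A ∨ v ∈ A
    · simp [dist_eq_one_of_adj_iff hadj huv h]
    · push Not at h
      simp [dist_eq_two_of_adj_iff hadj ha huv h.1 h.2]
  have hab₀ : a ≠ b₀ := ne_of_mem_of_not_mem ha hb₀
  have hab₁ : a ≠ b₁ := ne_of_mem_of_not_mem ha hb₁
  refine metricDim_eq (W := {a, b₀}ᶜ) (fun u v huv => ?_) ?_ fun W hW => ?_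
  · by_cases hu : u ∈ ({a, b₀}ᶜ : Set V)
    · exact ⟨u, hu, by simpa [eq_comm] using hdist_ne_zero v u huv.symm⟩
    by_cases hv : v ∈ ({a, b₀}ᶜ : Set V)
    · exact ⟨v, hv, by simpa using hdist_ne_zero u v huv⟩
    have key : G.dist a b₁ ≠ G.dist b₀ b₁ := by
      rw [dist_eq_one_of_adj_iff hadj hab₁ (Or.inl ha),
        dist_eq_two_of_adj_iff hadj ha hb hb₀ hb₁]
      omega
    refine ⟨b₁, by simp [hab₁.symm, hb.symm], ?_⟩
    simp only [Set.mem_compl_iff, Set.mem_insert_iff, Set.mem_singleton_iff, not_not] at hu hv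
    rcases hu with rfl | rfl <;> rcases hv with rfl | rfl
    all_goals first | exact absurd rfl huv | exact key | exact key.symm
  · rw [Set.ncard_compl, Set.ncard_pair hab₀]
  · have hA : (A \ W).ncard ≤ 1 := hW.ncard_sdiff_le_one fun x hx y hy w hwx hwy => by
      rw [dist_eq_one_of_adj_iff hadj hwx.symm (Or.inl hx),
        dist_eq_one_of_adj_iff hadj hwy.symm (Or.inl hy)]
    have hmissAc : (Aᶜ \ W).ncard ≤ 1 := hW.ncard_sdiff_le_one fun x hx y hy w hwx hwy => by
      by_cases hw : w ∈ A
      · rw [dist_eq_one_of_adj_iff hadj hwx.symm (Or.inr hw),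
          dist_eq_one_of_adj_iff hadj hwy.symm (Or.inr hw)]
      · rw [dist_eq_two_of_adj_iff hadj ha hwx.symm hx hw,
          dist_eq_two_of_adj_iff hadj ha hwy.symm hy hw]
    have hWc : Wᶜ = (A \ W) ∪ (Aᶜ \ W) := by
      ext x
      by_cases x ∈ A <;> simp [*]
    have hunion := Set.ncard_union_le (A \ W) (Aᶜ \ W)
    have hcard := Set.ncard_add_ncard_compl W
    rw [hWc] at hcard
    omega

end JoinOfCliqueAndIndependentSet

namespace ZMod

variable {n p q m : ℕ}

lemma isEssentialIdeal_iff_of_eq_pow_mul (hp : p.Prime) (hq : q.Prime) (hpq : p ≠ q)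
    (hm : m ≠ 0) (hn : n = p ^ m * q) (I : Ideal (ZMod n)) :
    IsEssentialIdeal I ↔ ¬ I ≤ span {((p ^ m : ℕ) : ZMod n)} ∧ ¬ I ≤ span {(q : ZMod n)} := by
  have hqp : ¬ q ∣ p ^ m := fun h =>
    hpq ((Nat.prime_dvd_prime_iff_eq hq hp).mp (hq.dvd_of_dvd_pow h)).symm
  have hpn : p ∣ n := hn ▸ (dvd_pow_self p hm).mul_right q
  have hqn : q ∣ n := hn ▸ dvd_mul_left q _
  have hn1 : 1 < n := hn ▸ hq.one_lt.trans_le (Nat.le_mul_of_pos_left q (pow_pos hp.pos m))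
  have hqI := span_natCast_div_le_iff_not_le (hn.trans (by ring)) hq one_ne_zero hqp I
  rw [pow_one] at hqI
  rw [isEssentialIdeal_iff hn1, ← hqI,
    ← span_natCast_div_le_iff_not_le hn hp hm ((Nat.prime_dvd_prime_iff_eq hp hq).not.mpr hpq)]
  refine ⟨fun h => ⟨h p hp hpn, h q hq hqn⟩, fun ⟨hp', hq'⟩ r hr hrn => ?_⟩
  rw [hn] at hrn
  rcases (Nat.Prime.dvd_mul hr).mp hrn with h | h
  · rwa [(Nat.prime_dvd_prime_iff_eq hr hp).mp (hr.dvd_of_dvd_pow h)]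
  · rwa [(Nat.prime_dvd_prime_iff_eq hr hq).mp h]

lemma essentialIdealGraph_adj_iff (hp : p.Prime) (hq : q.Prime) (hpq : p ≠ q) (hm : m ≠ 0)
    (hn : n = p ^ m * q) (u v : {I : Ideal (ZMod n) // I ≠ ⊥ ∧ I ≠ ⊤}) :
    (essentialIdealGraph (ZMod n)).Adj u v ↔
      u ≠ v ∧ (¬ u.1 ≤ span {(q : ZMod n)} ∨ ¬ v.1 ≤ span {(q : ZMod n)}) := by
  refine and_congr_right fun huv => ?_
  have hatom : IsAtom (span {((p ^ m : ℕ) : ZMod n)}) := by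
    have hpm : n / q = p ^ m := hn ▸ Nat.mul_div_cancel _ hq.pos
    exact hpm ▸ isAtom_span_natCast_div (hn ▸ mul_ne_zero (pow_ne_zero m hp.ne_zero) hq.ne_zero)
      hq (hn ▸ dvd_mul_left q _)
  rw [isEssentialIdeal_iff_of_eq_pow_mul hp hq hpq hm hn, sup_le_iff, sup_le_iff, ← not_and_or]
  refine and_iff_right_of_imp fun _ ⟨hu, hv⟩ => huv (Subtype.ext ?_)
  rw [(hatom.le_iff_eq u.2.1).mp hu, (hatom.le_iff_eq v.2.1).mp hv]

lemma nonempty_setOf_not_le_span (hp : p.Prime) (hq : q.Prime) (hpq : p ≠ q) (hm : m ≠ 0)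
    (hn : n = p ^ m * q) :
    {v : {I : Ideal (ZMod n) // I ≠ ⊥ ∧ I ≠ ⊤} | ¬ v.1 ≤ span {(q : ZMod n)}}.Nonempty := by
  have hqp : ¬ q ∣ p := (Nat.prime_dvd_prime_iff_eq hq hp).not.mpr hpq.symm
  have hqn : q ∣ n := hn ▸ dvd_mul_left q _
  refine ⟨⟨span {(p : ZMod n)}, span_natCast_ne_bot_and_ne_top
    (hn ▸ (dvd_pow_self p hm).mul_right q) hp.ne_one fun h => hqp (h ▸ hqn)⟩, ?_⟩
  exact (span_natCast_le_span_natCast_iff hqn).not.mpr hqp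

lemma nontrivial_compl_setOf_not_le_span (hp : p.Prime) (hq : q.Prime) (hpq : p ≠ q)
    (hm : 2 ≤ m) (hn : n = p ^ m * q) :
    {v : {I : Ideal (ZMod n) // I ≠ ⊥ ∧ I ≠ ⊤} | ¬ v.1 ≤ span {(q : ZMod n)}}ᶜ.Nontrivial := by
  have hqn : q ∣ n := hn ▸ dvd_mul_left q _
  have hpqn : p * q ∣ n := hn ▸ mul_dvd_mul (dvd_pow_self p (by omega)) dvd_rfl
  have hq_ne : q ≠ n := fun h =>
    (Nat.prime_dvd_prime_iff_eq hp hq).not.mpr hpq (h ▸ (dvd_mul_right p q).trans hpqn)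
  have hpq_ne : p * q ≠ n := by
    intro h
    have hp1 : p ^ 1 = p ^ m :=
      (pow_one p).trans (Nat.eq_of_mul_eq_mul_right hq.pos (h.trans hn))
    have := Nat.pow_right_injective hp.two_le hp1
    omega
  refine ⟨⟨span {(q : ZMod n)}, span_natCast_ne_bot_and_ne_top hqn hq.ne_one hq_ne⟩, by simp,
    ⟨span {((p * q : ℕ) : ZMod n)},
      span_natCast_ne_bot_and_ne_top hpqn (fun h => hp.ne_one (mul_eq_one.mp h).1) hpq_ne⟩,
    ?_, fun h => ?_⟩
  · simpa using (span_natCast_le_span_natCast_iff hqn).mpr (dvd_mul_left q p)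
  · have hqpq := (span_natCast_inj hqn hpqn).mp (congrArg Subtype.val h)
    exact hp.ne_one (Nat.eq_of_mul_eq_mul_right hq.pos (hqpq.symm.trans (one_mul q).symm))

lemma card_ideal_ne_bot_and_ne_top_of_eq_pow_mul (hp : p.Prime) (hq : q.Prime) (hpq : p ≠ q)
    (hn : n = p ^ m * q) : Nat.card {I : Ideal (ZMod n) // I ≠ ⊥ ∧ I ≠ ⊤} = 2 * m := by
  have hn0 : n ≠ 0 := hn ▸ mul_ne_zero (pow_ne_zero m hp.ne_zero) hq.ne_zero
  have : Fact (1 < n) :=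
    ⟨hn ▸ hq.one_lt.trans_le (Nat.le_mul_of_pos_left q (pow_pos hp.pos m))⟩
  rw [Nat.card_ne_bot_and_ne_top bot_ne_top, card_ideal hn0, hn,
    Nat.Coprime.card_divisors_mul (Nat.Coprime.pow_left m ((Nat.coprime_primes hp hq).mpr hpq)),
    Nat.divisors_prime_pow hp, hq.divisors]
  simp [hq.one_lt.ne]
  omega

end ZMod

/-- For `n = p₁^m p₂` with `p₁ ≠ p₂` primes and `m ≥ 2`, the metric
dimension of the essential ideal graph of `ℤ/nℤ` equals `2m - 2`. -/
theorem stmt_13 (p₁ p₂ : ℕ) (hp₁ : p₁.Prime) (hp₂ : p₂.Prime) (hne : p₁ ≠ p₂)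
    (m : ℕ) (hm : 2 ≤ m) (n : ℕ) (hn : n = p₁ ^ m * p₂) :
    metricDim (essentialIdealGraph (ZMod n)) = 2 * m - 2 := by
  have hm0 : m ≠ 0 := by omega
  have : NeZero n := ⟨hn ▸ mul_ne_zero (pow_ne_zero m hp₁.ne_zero) hp₂.ne_zero⟩
  rw [metricDim_eq_card_sub_two (ZMod.essentialIdealGraph_adj_iff hp₁ hp₂ hne hm0 hn)
      (ZMod.nonempty_setOf_not_le_span hp₁ hp₂ hne hm0 hn)
      (ZMod.nontrivial_compl_setOf_not_le_span hp₁ hp₂ hne hm hn),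
    ZMod.card_ideal_ne_bot_and_ne_top_of_eq_pow_mul hp₁ hp₂ hne hn]
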